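/- Let F be a skew field (division ring), R = Mat(d, F), and U the simple R-module. Then for L = U^r, M = U^m, N = U^n, the normal Munn algebra 𝕄(R, L, M, N) is isomorphic as a ring to 𝕄(F, F^r, F^m, F^n); in particular it depends only on r, m, n and not on d. -/

import Mathlib

/-- The Munn algebra `𝕄(R, M, N, μ)`: the additive group `Hom_R(M, N)` equipped with the
sandwich multiplication `a ⋅ b = a ∘ μ ∘ b`. -/
@[nolint unusedArguments]
def Munn {R M N : Type*} [Ring R] [AddCommGroup M] [AddCommGroup N] [Module R M]
    [Module R N] (_ : N →ₗ[R] M) : Type _ := M →ₗ[R] N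

namespace Munn

variable {R M N : Type*} [Ring R] [AddCommGroup M] [AddCommGroup N] [Module R M]
  [Module R N] (μ : N →ₗ[R] M)

instance : AddCommGroup (Munn μ) := inferInstanceAs (AddCommGroup (M →ₗ[R] N))

/-- Regard an element of the Munn algebra as a linear map. -/
def toHom (a : Munn μ) : M →ₗ[R] N := a

/-- Regard a linear map as an element of the Munn algebra. -/
def ofHom (a : M →ₗ[R] N) : Munn μ := a

instance : NonUnitalRing (Munn μ) :=
  { (inferInstanceAs (AddCommGroup (M →ₗ[R] N)) : AddCommGroup (M →ₗ[R] N)) with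
    mul := fun a b => ofHom μ ((toHom μ a) ∘ₗ μ ∘ₗ (toHom μ b))
    left_distrib := fun a b c => LinearMap.ext fun x => by
      show (toHom μ a) (μ ((toHom μ b + toHom μ c) x)) =
        (toHom μ a) (μ ((toHom μ b) x)) + (toHom μ a) (μ ((toHom μ c) x))
      simp
    right_distrib := fun a b c => LinearMap.ext fun x => by
      show (toHom μ a + toHom μ b) (μ ((toHom μ c) x)) =
        (toHom μ a) (μ ((toHom μ c) x)) + (toHom μ b) (μ ((toHom μ c) x))
      simp
    zero_mul := fun a => LinearMap.ext fun x => by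
      show (0 : M →ₗ[R] N) (μ ((toHom μ a) x)) = 0
      simp
    mul_zero := fun a => LinearMap.ext fun x => by
      show (toHom μ a) (μ ((0 : M →ₗ[R] N) x)) = 0
      simp
    mul_assoc := fun a b c => LinearMap.ext fun _ => rfl }

theorem mul_def (a b : Munn μ) : a * b = ofHom μ ((toHom μ a) ∘ₗ μ ∘ₗ (toHom μ b)) := rfl

end Munn

/-- The canonical sandwich homomorphism `μ = [[1_L, 0], [0, 0]] : L ⊕ N → L ⊕ M`,
`(l, n) ↦ (l, 0)`, defining the normal Munn algebra `𝕄(R, L, M, N)`. -/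
def normalMu (R L M N : Type*) [Ring R] [AddCommGroup L] [AddCommGroup M] [AddCommGroup N]
    [Module R L] [Module R M] [Module R N] : (L × N) →ₗ[R] (L × M) :=
  (LinearMap.inl R L M) ∘ₗ (LinearMap.fst R L N)

section SimpleModule

variable {d : ℕ} {F : Type*} [DivisionRing F]

/-- The natural action of `Mat(d, F)` on column vectors `F^d`. -/
instance matrixSMulVec : SMul (Matrix (Fin d) (Fin d) F) (Fin d → F) := ⟨Matrix.mulVec⟩

/-- `F^d` as the (simple) module over `R = Mat(d, F)`. -/
instance matrixModuleVec : Module (Matrix (Fin d) (Fin d) F) (Fin d → F) where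
  one_smul v := Matrix.one_mulVec v
  mul_smul A B v := (Matrix.mulVec_mulVec v A B).symm
  smul_zero A := Matrix.mulVec_zero A
  smul_add A u v := Matrix.mulVec_add A u v
  add_smul A B v := Matrix.add_mulVec A B v
  zero_smul v := Matrix.zero_mulVec v

end SimpleModule

/-!
An `R`-linear map `g : M^ι → N^ι` over `R = Mat(ι, F)` commutes with the matrix units, so it is the
coordinatewise extension of the `F`-linear map `x ↦ g (single i₀ x) i₀`; hence
`f ↦ f^ι` identifies `Hom_F(M, N)` with `Hom_R(M^ι, N^ι)`, compatibly with composition. The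
sandwich product of a Munn algebra is made of compositions only, so it transfers along this
identification. Finally, transposition identifies `U^k = (F^d)^k` with `(F^k)^d` as
`Mat(d, F)`-modules, and turns the sandwich map of `𝕄(R, U^r, U^m, U^n)` into the `d`-th power
of that of `𝕄(F, F^r, F^m, F^n)`.
-/

namespace LinearMap

open Matrix.Module

variable {ι R M N : Type*} [Ring R] [Fintype ι] [DecidableEq ι] [AddCommGroup M] [Module R M]
  [AddCommGroup N] [Module R N]

def ofMatrixModule (i₀ : ι) (g : (ι → M) →ₗ[Matrix ι ι R] (ι → N)) : M →ₗ[R] N where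
  toFun x := g (Pi.single i₀ x) i₀
  map_add' x y := by simp only [Pi.single_add, map_add, Pi.add_apply]
  map_smul' c x := by
    have hx : (Pi.single i₀ (c • x) : ι → M) = Matrix.single i₀ i₀ c • Pi.single i₀ x := by simp
    rw [RingHom.id_apply, hx, map_smul, single_smul, Pi.single_eq_same]

theorem ofMatrixModule_apply (i₀ : ι) (g : (ι → M) →ₗ[Matrix ι ι R] (ι → N)) (x : M) :
    ofMatrixModule i₀ g x = g (Pi.single i₀ x) i₀ := rfl

theorem mapMatrixModule_ofMatrixModule (i₀ : ι) (g : (ι → M) →ₗ[Matrix ι ι R] (ι → N)) :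
    (ofMatrixModule i₀ g).mapMatrixModule ι = g := by
  ext v j
  -- the matrix unit `E_{i₀ j}` moves coordinate `j` to coordinate `i₀`
  have hv : (Pi.single i₀ (v j) : ι → M) = Matrix.single i₀ j (1 : R) • v := by simp
  rw [mapMatrixModule_apply, compLeft_apply, Function.comp_apply, ofMatrixModule_apply, hv,
    map_smul, single_smul, Pi.single_eq_same, one_smul]

def mapMatrixModuleAddEquiv (i₀ : ι) : (M →ₗ[R] N) ≃+ ((ι → M) →ₗ[Matrix ι ι R] (ι → N)) where
  toFun f := f.mapMatrixModule ι
  invFun := ofMatrixModule i₀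
  left_inv f := by ext x; simp [ofMatrixModule_apply]
  right_inv := mapMatrixModule_ofMatrixModule i₀
  map_add' f g := by ext; simp

end LinearMap

namespace Matrix.Module

variable {ι R P Q : Type*} [Ring R] [Fintype ι] [DecidableEq ι] [AddCommGroup P] [Module R P]
  [AddCommGroup Q] [Module R Q]

variable (ι P Q) in
def prodArrowLinearEquiv : ((ι → P) × (ι → Q)) ≃ₗ[Matrix ι ι R] (ι → P × Q) :=
  { (Equiv.arrowProdEquivProdArrow ι _ _).symm with
    map_add' _ _ := rfl
    map_smul' A v := by
      ext i <;> simp [Equiv.arrowProdEquivProdArrow, Prod.fst_sum, Prod.snd_sum] }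

variable (F : Type*) [DivisionRing F] (d : ℕ)

def piCommLinearEquiv (κ : Type*) :
    (κ → Fin d → F) ≃ₗ[Matrix (Fin d) (Fin d) F] (Fin d → κ → F) :=
  { Equiv.piComm _ with
    map_add' _ _ := rfl
    map_smul' A v := by
      ext i k
      show A.mulVec (v k) i = _
      simp [Equiv.piComm, Matrix.mulVec, dotProduct, Finset.sum_apply] }

def piCommProdLinearEquiv (κ κ' : Type*) :
    ((κ → Fin d → F) × (κ' → Fin d → F)) ≃ₗ[Matrix (Fin d) (Fin d) F]
      (Fin d → (κ → F) × (κ' → F)) :=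
  ((piCommLinearEquiv F d κ).prodCongr (piCommLinearEquiv F d κ')).trans
    (prodArrowLinearEquiv (Fin d) _ _)

theorem piCommProdLinearEquiv_comp_normalMu (κ κ' κ'' : Type*) :
    (piCommProdLinearEquiv F d κ κ').toLinearMap ∘ₗ
      normalMu (Matrix (Fin d) (Fin d) F) (κ → Fin d → F) (κ' → Fin d → F) (κ'' → Fin d → F) =
    (normalMu F (κ → F) (κ' → F) (κ'' → F)).mapMatrixModule (Fin d) ∘ₗ
      (piCommProdLinearEquiv F d κ κ'').toLinearMap := by
  ext <;> rfl

end Matrix.Module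

namespace Munn

variable {R M N : Type*} [Ring R] [AddCommGroup M] [AddCommGroup N] [Module R M] [Module R N]

def ringEquivOfAddEquiv {S M' N' : Type*} [Ring S] [AddCommGroup M'] [AddCommGroup N']
    [Module S M'] [Module S N'] {μ : N →ₗ[R] M} {μ' : N' →ₗ[S] M'}
    (Φ : (M →ₗ[R] N) ≃+ (M' →ₗ[S] N')) (hΦ : ∀ a b, Φ (a ∘ₗ μ ∘ₗ b) = Φ a ∘ₗ μ' ∘ₗ Φ b) :
    Munn μ ≃+* Munn μ' :=
  { Φ with map_mul' := hΦ }

def congr {M' N' : Type*} [AddCommGroup M'] [AddCommGroup N'] [Module R M'] [Module R N']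
    {μ : N →ₗ[R] M} {μ' : N' →ₗ[R] M'} (eM : M ≃ₗ[R] M') (eN : N ≃ₗ[R] N')
    (h : eM.toLinearMap ∘ₗ μ = μ' ∘ₗ eN.toLinearMap) : Munn μ ≃+* Munn μ' :=
  ringEquivOfAddEquiv (eM.arrowCongrAddEquiv eN) fun a b => by
    have hμ : eM.symm.toLinearMap ∘ₗ μ' ∘ₗ eN.toLinearMap = μ := by
      rw [← h, ← LinearMap.comp_assoc, eM.symm_comp, LinearMap.id_comp]
    ext x
    simp [← hμ]

open Matrix.Module

noncomputable def mapMatrixModule (ι : Type*) [Fintype ι] [DecidableEq ι] [Nonempty ι]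
    (μ : N →ₗ[R] M) : Munn μ ≃+* Munn (μ.mapMatrixModule ι) :=
  ringEquivOfAddEquiv (LinearMap.mapMatrixModuleAddEquiv (Classical.arbitrary ι)) fun a b => by
    simp [LinearMap.mapMatrixModuleAddEquiv, LinearMap.mapMatrixModule_comp]

noncomputable def normalMuMatrixRingEquiv (F : Type*) [DivisionRing F] (d : ℕ) [NeZero d]
    (κ κ' κ'' : Type*) :
    Munn (normalMu (Matrix (Fin d) (Fin d) F) (κ → Fin d → F) (κ' → Fin d → F)
        (κ'' → Fin d → F)) ≃+*
      Munn (normalMu F (κ → F) (κ' → F) (κ'' → F)) :=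
  (congr _ _ (piCommProdLinearEquiv_comp_normalMu F d κ κ' κ'')).trans
    (mapMatrixModule (Fin d) _).symm

end Munn

/-- For `R = Mat(d, F)` (`F` a skew field, `d ≥ 1`) and `U = F^d` the simple `R`-module,
the normal Munn algebra `𝕄(R, U^r, U^m, U^n)` is isomorphic as a ring to
`𝕄(F, F^r, F^m, F^n)`; in particular it depends only on `r, m, n` and not on `d`. -/
theorem munn_matrix_ring_reduction (F : Type*) [DivisionRing F] (d : ℕ) (hd : 0 < d)
    (r m n : ℕ) :
    Nonempty
      (Munn (normalMu (Matrix (Fin d) (Fin d) F)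
          (Fin r → (Fin d → F)) (Fin m → (Fin d → F)) (Fin n → (Fin d → F))) ≃+*
        Munn (normalMu F (Fin r → F) (Fin m → F) (Fin n → F))) :=
  have : NeZero d := ⟨hd.ne'⟩
  ⟨Munn.normalMuMatrixRingEquiv F d (Fin r) (Fin m) (Fin n)⟩
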